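/- There is an absolute constant c > 0 such that for every finite connected graph X, every integer n > 1, and every Lipschitz map T : X → ℝⁿ with Lipschitz constant at most 1 (with respect to the shortest-path metric on X and the Euclidean norm on ℝⁿ), there exists a unit vector θ ∈ S^{n−1} such that (∑_{x∈X} ⟨T(x), θ⟩² μ(x))^{1/2} ≤ c · n^{−1/2} · λ_{⌊n/2⌋−1}^{−1/2}, where λ_{⌊n/2⌋−1} is the (⌊n/2⌋−1)-st smallest nonzero eigenvalue of the Laplacian of X (counted with multiplicity). -/

import Mathlib

/-- The graph Laplacian `Δf(x) = 2 (f x - (1/deg x) ∑_{y ∼ x} f y)`. -/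
noncomputable def graphLaplacian {V : Type*} [Fintype V] (G : SimpleGraph V)
    [DecidableRel G.Adj] (f : V → ℝ) (x : V) : ℝ :=
  2 * (f x - ((G.degree x : ℝ))⁻¹ * ∑ y ∈ G.neighborFinset x, f y)

/-- The stationary measure of the simple random walk, `μ x = deg x / (2 |E|)`
(note that `2 |E| = ∑_y deg y`). -/
noncomputable def stationaryMeasure {V : Type*} [Fintype V] (G : SimpleGraph V)
    [DecidableRel G.Adj] (x : V) : ℝ :=
  (G.degree x : ℝ) / (∑ y : V, (G.degree y : ℝ))


/-!
Take the `μ`-moments `∑ₓ μ(x) φ(x) T(x)` of `T` against the constants and the first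
`⌊n/2⌋ - 2` eigenfunctions `φ`. At least `n/2` orthonormal directions `θ` are orthogonal to all of
these moments, so each coordinate `⟨T, θ⟩` is `μ`-orthogonal to those eigenfunctions and satisfies
the Poincaré inequality `λ [g, g] ≤ [Δg, g]` with `λ = λ_{⌊n/2⌋-1}`. Since `T` is 1-Lipschitz,
Bessel's inequality bounds the sum of the Dirichlet energies `[Δg, g]` of the coordinates along an
orthonormal family by `1`, so the best of the `n/2` directions has `[g, g] ≤ 2 / (n λ)`.
-/

open Finset Submodule

namespace LinearMap.IsAdjointPair

variable {E ι : Type*} [AddCommGroup E] [Module ℝ E] {B : LinearMap.BilinForm ℝ E}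
  {L : E →ₗ[ℝ] E}

theorem apply_eq_zero_of_eigenvalue_ne (hL : B.IsAdjointPair B L L) {x y : E} {a b : ℝ}
    (hx : L x = a • x) (hy : L y = b • y) (hab : a ≠ b) : B x y = 0 := by
  have h := hL x y
  rw [hx, hy, map_smul, map_smul, LinearMap.smul_apply, smul_eq_mul, smul_eq_mul] at h
  exact (mul_eq_zero.mp (by linear_combination h : (a - b) * B x y = 0)).resolve_left
    (sub_ne_zero.mpr hab)

/-- Courant–Fischer, easy direction. Eigenvectors sharing an eigenvalue need not be
orthogonal, so `g` is split into its components along the distinct eigenvalues. -/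
theorem mul_apply_self_le [Fintype ι] (hL : B.IsAdjointPair B L L) (hB : ∀ x, 0 ≤ B x x)
    {F : ι → E} {Λ : ι → ℝ} (hF : ∀ i, L (F i) = Λ i • F i) {g : E}
    (hg : g ∈ span ℝ (Set.range F)) {t : ℝ} (hgt : ∀ i, Λ i < t → B (F i) g = 0) :
    t * B g g ≤ B (L g) g := by
  obtain ⟨c, rfl⟩ := (mem_span_range_iff_exists_fun ℝ).mp hg
  set g := ∑ i, c i • F i
  have sum_apply (s : Finset ι) (a : ι → ℝ) (h : E) :
      B (∑ i ∈ s, a i • F i) h = ∑ i ∈ s, a i * B (F i) h := by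
    simp [map_sum, LinearMap.sum_apply]
  have apply_sum (s : Finset ι) (a : ι → ℝ) (i : ι) :
      B (F i) (∑ j ∈ s, a j • F j) = ∑ j ∈ s, a j * B (F i) (F j) := by
    simp [map_sum]
  let part : ℝ → E := fun u => ∑ i with Λ i = u, c i • F i
  have apply_part (i : ι) : B (F i) g = B (F i) (part (Λ i)) := by
    rw [apply_sum, apply_sum, sum_filter]
    refine sum_congr rfl fun j _ => ?_
    split_ifs with hj
    · rfl
    · rw [apply_eq_zero_of_eigenvalue_ne hL (hF i) (hF j) (Ne.symm hj), mul_zero]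
  have hLg : L g - t • g = ∑ i, (c i * (Λ i - t)) • F i := by
    simp only [g, map_sum, map_smul, hF, smul_sum, smul_smul, ← sum_sub_distrib, ← sub_smul]
    exact sum_congr rfl fun i _ => by ring_nf
  have hmaps : ∀ i ∈ (univ : Finset ι), Λ i ∈ univ.image Λ :=
    fun i _ => mem_image_of_mem Λ (mem_univ i)
  have key : B (L g) g - t * B g g = ∑ u ∈ univ.image Λ, (u - t) * B (part u) (part u) := by
    calc B (L g) g - t * B g g = B (L g - t • g) g := by simp
      _ = ∑ u ∈ univ.image Λ, ∑ i with Λ i = u, c i * (Λ i - t) * B (F i) g := by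
          rw [hLg, sum_apply, sum_fiberwise_of_maps_to hmaps]
      _ = ∑ u ∈ univ.image Λ, (u - t) * B (part u) (part u) := by
          refine sum_congr rfl fun u _ => ?_
          rw [sum_apply, mul_sum]
          refine sum_congr rfl fun i hi => ?_
          rw [apply_part, (mem_filter.mp hi).2]
          ring
  have hterm : ∀ u ∈ univ.image Λ, 0 ≤ (u - t) * B (part u) (part u) := by
    intro u _
    rcases lt_or_ge u t with hu | hu
    · have : B (part u) (part u) = 0 := by
        rw [sum_apply]
        refine sum_eq_zero fun i hi => ?_
        have hi : Λ i = u := (mem_filter.mp hi).2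
        rw [← hi, ← apply_part, hgt i (hi ▸ hu), mul_zero]
      rw [this, mul_zero]
    · exact mul_nonneg (sub_nonneg.mpr hu) (hB _)
  linarith [sum_nonneg hterm]

end LinearMap.IsAdjointPair

theorem LinearMap.BilinForm.notMem_span_range_of_apply_eq_zero {R E ι : Type*} [CommRing R]
    [AddCommGroup E] [Module R E] {B : LinearMap.BilinForm R E} {v : ι → E} {x : E}
    (hx : B x x ≠ 0) (hv : ∀ i, B (v i) x = 0) : x ∉ span R (Set.range v) := fun hmem =>
  hx (span_le.mpr (Set.range_subset_iff.mpr hv : Set.range v ⊆ LinearMap.ker (B.flip x)) hmem)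

theorem exists_orthonormal_forall_inner_eq_zero {𝕜 E ι : Type*} [RCLike 𝕜]
    [NormedAddCommGroup E] [InnerProductSpace 𝕜 E] [FiniteDimensional 𝕜 E] [Fintype ι]
    (v : ι → E) {k : ℕ} (hk : Fintype.card ι ≤ k) :
    ∃ e : Fin (Module.finrank 𝕜 E - k) → E,
      Orthonormal 𝕜 e ∧ ∀ j i, inner 𝕜 (v i) (e j) = 0 := by
  set K := span 𝕜 (Set.range v)
  have hK : Module.finrank 𝕜 K ≤ Fintype.card ι := finrank_range_le_card v
  have hle : Module.finrank 𝕜 E - k ≤ Module.finrank 𝕜 Kᗮ := by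
    have := K.finrank_add_finrank_orthogonal
    omega
  let b := stdOrthonormalBasis 𝕜 Kᗮ
  refine ⟨fun j => b (Fin.castLE hle j),
    (b.orthonormal.comp _ (Fin.castLE_injective hle)).comp_linearIsometry Kᗮ.subtypeₗᵢ,
    fun j i => ?_⟩
  exact (mem_orthogonal K _).mp (b _).2 (v i) (subset_span (Set.mem_range_self i))

namespace SimpleGraph

variable {V : Type*} [Fintype V] (G : SimpleGraph V) [DecidableRel G.Adj]

/-- The inner product `[·, ·]_X` of the paper. -/
noncomputable def stationaryForm : LinearMap.BilinForm ℝ (V → ℝ) :=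
  LinearMap.mk₂ ℝ (fun g h => ∑ x, g x * h x * stationaryMeasure G x)
    (fun _ _ _ => by simp only [Pi.add_apply, add_mul, sum_add_distrib])
    (fun _ _ _ => by simp only [Pi.smul_apply, smul_eq_mul, mul_sum, mul_assoc])
    (fun _ _ _ => by simp only [Pi.add_apply, mul_add, add_mul, sum_add_distrib])
    (fun _ _ _ => by
      simp only [Pi.smul_apply, smul_eq_mul, mul_sum]
      exact sum_congr rfl fun _ _ => by ring)

theorem stationaryForm_apply (g h : V → ℝ) :
    G.stationaryForm g h = ∑ x, g x * h x * stationaryMeasure G x := rfl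

noncomputable def graphLaplacianLinearMap : Module.End ℝ (V → ℝ) where
  toFun := graphLaplacian G
  map_add' g h := by
    ext x
    simp only [graphLaplacian, Pi.add_apply, sum_add_distrib]
    ring
  map_smul' a g := by
    ext x
    simp only [graphLaplacian, Pi.smul_apply, smul_eq_mul, RingHom.id_apply, ← mul_sum]
    ring

theorem graphLaplacianLinearMap_apply (g : V → ℝ) :
    G.graphLaplacianLinearMap g = graphLaplacian G g := rfl

theorem stationaryMeasure_nonneg (x : V) : 0 ≤ stationaryMeasure G x := by
  unfold stationaryMeasure
  positivity

theorem stationaryMeasure_pos (hdeg : ∀ x, 0 < G.degree x) (x : V) :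
    0 < stationaryMeasure G x :=
  div_pos (by exact_mod_cast hdeg x)
    (sum_pos (fun y _ => by exact_mod_cast hdeg y) ⟨x, mem_univ x⟩)

theorem stationaryForm_self_nonneg (g : V → ℝ) : 0 ≤ G.stationaryForm g g :=
  sum_nonneg fun x _ => mul_nonneg (mul_self_nonneg _) (G.stationaryMeasure_nonneg x)

theorem stationaryForm_self_pos (hdeg : ∀ x, 0 < G.degree x) {g : V → ℝ} (hg : g ≠ 0) :
    0 < G.stationaryForm g g := by
  obtain ⟨x, hx⟩ := Function.ne_iff.mp hg
  exact sum_pos' (fun y _ => mul_nonneg (mul_self_nonneg _) (G.stationaryMeasure_nonneg y))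
    ⟨x, mem_univ x, mul_pos (mul_self_pos.mpr hx) (G.stationaryMeasure_pos hdeg x)⟩

theorem stationaryForm_one_one (hdeg : ∀ x, 0 < G.degree x) [Nonempty V] :
    G.stationaryForm 1 1 = 1 := by
  obtain ⟨x⟩ := ‹Nonempty V›
  have hS : (∑ y : V, (G.degree y : ℝ)) ≠ 0 :=
    (sum_pos (fun y _ => by exact_mod_cast hdeg y) ⟨x, mem_univ x⟩).ne'
  simp only [stationaryForm_apply, Pi.one_apply, one_mul, stationaryMeasure, ← sum_div,
    div_self hS]

theorem sum_neighborFinset_comm {M : Type*} [AddCommMonoid M] (u : V → V → M) :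
    ∑ x, ∑ y ∈ G.neighborFinset x, u x y = ∑ x, ∑ y ∈ G.neighborFinset x, u y x := by
  simp only [neighborFinset_eq_filter, sum_filter]
  rw [sum_comm]
  exact sum_congr rfl fun x _ => sum_congr rfl fun y _ => if_congr (G.adj_comm y x) rfl rfl

theorem stationaryForm_graphLaplacian (g h : V → ℝ) :
    G.stationaryForm (graphLaplacian G g) h = (∑ y, (G.degree y : ℝ))⁻¹ *
      ∑ x, ∑ y ∈ G.neighborFinset x, (g x - g y) * (h x - h y) := by
  have hswap := G.sum_neighborFinset_comm fun x y => (g x - g y) * h y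
  have hsplit : ∑ x, ∑ y ∈ G.neighborFinset x, (g x - g y) * (h x - h y) =
      2 * ∑ x, (∑ y ∈ G.neighborFinset x, (g x - g y)) * h x := by
    calc ∑ x, ∑ y ∈ G.neighborFinset x, (g x - g y) * (h x - h y)
        = ∑ x, ∑ y ∈ G.neighborFinset x, (g x - g y) * h x -
            ∑ x, ∑ y ∈ G.neighborFinset x, (g x - g y) * h y := by
          simp only [mul_sub, sum_sub_distrib]
      _ = ∑ x, ∑ y ∈ G.neighborFinset x, (g x - g y) * h x +
            ∑ x, ∑ y ∈ G.neighborFinset x, (g x - g y) * h x := by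
          rw [hswap, sub_eq_add_neg, ← sum_neg_distrib]
          congr 1
          refine sum_congr rfl fun x _ => ?_
          rw [← sum_neg_distrib]
          exact sum_congr rfl fun y _ => by ring
      _ = 2 * ∑ x, (∑ y ∈ G.neighborFinset x, (g x - g y)) * h x := by
          simp only [sum_mul]
          ring
  rw [hsplit, stationaryForm_apply, mul_sum, mul_sum]
  refine sum_congr rfl fun x _ => ?_
  rw [sum_sub_distrib, sum_const, card_neighborFinset_eq_degree, nsmul_eq_mul, graphLaplacian,
    stationaryMeasure]
  rcases eq_or_ne (G.degree x) 0 with hx | hx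
  · have : G.neighborFinset x = ∅ := card_eq_zero.mp (by rw [card_neighborFinset_eq_degree, hx])
    simp [hx, this]
  · field_simp

theorem stationaryForm_comm (g h : V → ℝ) : G.stationaryForm g h = G.stationaryForm h g :=
  sum_congr rfl fun x _ => by ring

theorem isAdjointPair_graphLaplacianLinearMap :
    G.stationaryForm.IsAdjointPair G.stationaryForm G.graphLaplacianLinearMap
      G.graphLaplacianLinearMap := fun g h => by
  rw [G.stationaryForm_comm g, graphLaplacianLinearMap_apply, graphLaplacianLinearMap_apply,
    stationaryForm_graphLaplacian, stationaryForm_graphLaplacian]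
  exact congrArg _ (sum_congr rfl fun x _ => sum_congr rfl fun y _ => mul_comm _ _)

theorem stationaryForm_graphLaplacian_self_nonneg (g : V → ℝ) :
    0 ≤ G.stationaryForm (graphLaplacian G g) g := by
  rw [stationaryForm_graphLaplacian]
  exact mul_nonneg (inv_nonneg.mpr (sum_nonneg fun _ _ => Nat.cast_nonneg _))
    (sum_nonneg fun x _ => sum_nonneg fun y _ => mul_self_nonneg _)

theorem graphLaplacianLinearMap_one (hdeg : ∀ x, 0 < G.degree x) :
    G.graphLaplacianLinearMap 1 = 0 := by
  ext x
  have : (G.degree x : ℝ) ≠ 0 := by exact_mod_cast (hdeg x).ne'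
  simp [graphLaplacianLinearMap_apply, graphLaplacian, card_neighborFinset_eq_degree, this]

theorem graphLaplacianLinearMap_cons_one (hdeg : ∀ x, 0 < G.degree x) {m : ℕ}
    {lam : Fin m → ℝ} {f : Fin m → V → ℝ}
    (hf : ∀ i, G.graphLaplacianLinearMap (f i) = lam i • f i) (i : Fin (m + 1)) :
    G.graphLaplacianLinearMap ((Fin.cons 1 f : Fin (m + 1) → V → ℝ) i) =
      (Fin.cons 0 lam : Fin (m + 1) → ℝ) i • (Fin.cons 1 f : Fin (m + 1) → V → ℝ) i := by
  induction i using Fin.cases with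
  | zero => simpa using G.graphLaplacianLinearMap_one hdeg
  | succ i => simpa using hf i

theorem pos_of_graphLaplacianLinearMap_eq_smul (hdeg : ∀ x, 0 < G.degree x) {f : V → ℝ}
    (hf : f ≠ 0) {a : ℝ} (ha : a ≠ 0) (hfa : G.graphLaplacianLinearMap f = a • f) : 0 < a := by
  have h := G.stationaryForm_graphLaplacian_self_nonneg f
  rw [← graphLaplacianLinearMap_apply, hfa, map_smul, LinearMap.smul_apply, smul_eq_mul] at h
  exact ha.symm.lt_of_le (nonneg_of_mul_nonneg_left h (G.stationaryForm_self_pos hdeg hf))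

theorem span_range_cons_one_eq_top [Nonempty V] (hdeg : ∀ x, 0 < G.degree x)
    {lam : Fin (Fintype.card V - 1) → ℝ} {f : Fin (Fintype.card V - 1) → V → ℝ}
    (hli : LinearIndependent ℝ f) (hlam : ∀ i, lam i ≠ 0)
    (hf : ∀ i, G.graphLaplacianLinearMap (f i) = lam i • f i) :
    span ℝ (Set.range (Fin.cons 1 f : Fin (Fintype.card V - 1 + 1) → V → ℝ)) = ⊤ := by
  have hone : G.graphLaplacianLinearMap 1 = (0 : ℝ) • 1 := by
    rw [zero_smul, G.graphLaplacianLinearMap_one hdeg]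
  have hnotMem : (1 : V → ℝ) ∉ span ℝ (Set.range f) :=
    LinearMap.BilinForm.notMem_span_range_of_apply_eq_zero
      (by rw [G.stationaryForm_one_one hdeg]; exact one_ne_zero) fun i =>
      G.isAdjointPair_graphLaplacianLinearMap.apply_eq_zero_of_eigenvalue_ne (hf i) hone (hlam i)
  refine (linearIndependent_finCons.mpr ⟨hli, hnotMem⟩).span_eq_top_of_card_eq_finrank ?_
  rw [Fintype.card_fin, Module.finrank_fintype_fun_eq_card]
  have := Fintype.card_pos (α := V)
  omega

theorem sum_stationaryForm_graphLaplacian_inner_le_one {E ι : Type*} [NormedAddCommGroup E]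
    [InnerProductSpace ℝ E] [Fintype ι] {T : V → E} (hT : ∀ x y, G.Adj x y → ‖T x - T y‖ ≤ 1)
    {e : ι → E} (he : Orthonormal ℝ e) :
    ∑ j, G.stationaryForm (graphLaplacian G fun x => inner ℝ (T x) (e j))
      (fun x => inner ℝ (T x) (e j)) ≤ 1 := by
  set S := ∑ y, (G.degree y : ℝ)
  have hbessel (x y : V) (hxy : G.Adj x y) : ∑ j, inner ℝ (T x - T y) (e j) ^ 2 ≤ 1 := by
    have := he.sum_inner_products_le (T x - T y) (s := univ)
    simp only [Real.norm_eq_abs, sq_abs, real_inner_comm (T x - T y)] at this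
    nlinarith [hT x y hxy, norm_nonneg (T x - T y)]
  calc ∑ j, G.stationaryForm (graphLaplacian G fun x => inner ℝ (T x) (e j))
        (fun x => inner ℝ (T x) (e j))
      = S⁻¹ * ∑ x, ∑ y ∈ G.neighborFinset x, ∑ j, inner ℝ (T x - T y) (e j) ^ 2 := by
        simp only [stationaryForm_graphLaplacian, ← mul_sum, inner_sub_left, sq]
        congr 1
        rw [sum_comm]
        exact sum_congr rfl fun x _ => sum_comm
    _ ≤ S⁻¹ * ∑ x, ∑ y ∈ G.neighborFinset x, 1 := by
        gcongr with x _ y hy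
        exact hbessel x y ((G.mem_neighborFinset x y).mp hy)
    _ = S⁻¹ * S := by simp [S, card_neighborFinset_eq_degree]
    _ ≤ 1 := by by_cases hS : S = 0 <;> simp [hS]

theorem exists_norm_eq_one_mul_stationaryForm_inner_le {E ι : Type*} [NormedAddCommGroup E]
    [InnerProductSpace ℝ E] [FiniteDimensional ℝ E] [Fintype ι] {F : ι → V → ℝ} {Λ : ι → ℝ}
    (hF : ∀ i, G.graphLaplacianLinearMap (F i) = Λ i • F i) (hspan : span ℝ (Set.range F) = ⊤)
    {t : ℝ} {s : Finset ι} (hs : ∀ i, Λ i < t → i ∈ s) (hdim : #s < Module.finrank ℝ E)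
    {T : V → E} (hT : ∀ x y, G.Adj x y → ‖T x - T y‖ ≤ 1) :
    ∃ θ : E, ‖θ‖ = 1 ∧ ((Module.finrank ℝ E - #s : ℕ) : ℝ) *
      (t * G.stationaryForm (fun x => inner ℝ (T x) θ) (fun x => inner ℝ (T x) θ)) ≤ 1 := by
  set d := Module.finrank ℝ E - #s
  obtain ⟨e, he, horth⟩ := exists_orthonormal_forall_inner_eq_zero (𝕜 := ℝ)
    (fun i : s => ∑ x, (stationaryMeasure G x * F i x) • T x) (Fintype.card_coe s).le
  set g : Fin d → V → ℝ := fun j x => inner ℝ (T x) (e j)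
  have hperp (j : Fin d) (i : ι) (hi : Λ i < t) : G.stationaryForm (F i) (g j) = 0 := by
    have := horth j ⟨i, hs i hi⟩
    simp only [sum_inner, real_inner_smul_left] at this
    rw [stationaryForm_apply, ← this]
    exact sum_congr rfl fun x _ => by ring
  have hpoincare (j : Fin d) : t * G.stationaryForm (g j) (g j) ≤
      G.stationaryForm (graphLaplacian G (g j)) (g j) :=
    G.isAdjointPair_graphLaplacianLinearMap.mul_apply_self_le G.stationaryForm_self_nonneg hF
      (hspan ▸ mem_top) (hperp j)
  have henergy : ∑ j, t * G.stationaryForm (g j) (g j) ≤ 1 :=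
    (sum_le_sum fun j _ => hpoincare j).trans
      (G.sum_stationaryForm_graphLaplacian_inner_le_one hT he)
  have hd : (0 : ℝ) < d := by exact_mod_cast Nat.sub_pos_of_lt hdim
  have : ∑ j, (d : ℝ) * (t * G.stationaryForm (g j) (g j)) ≤ ∑ _j : Fin d, 1 := by
    rw [← mul_sum, sum_const, card_univ, Fintype.card_fin, nsmul_one]
    exact mul_le_of_le_one_right hd.le henergy
  obtain ⟨j, -, hj⟩ :=
    exists_le_of_sum_le (univ_nonempty_iff.mpr ⟨⟨0, Nat.sub_pos_of_lt hdim⟩⟩) this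
  exact ⟨e j, he.1 j, hj⟩

end SimpleGraph

theorem Real.sqrt_le_sqrt_two_mul_rpow_mul_rpow {a n t d : ℝ} (hn : 0 < n)
    (ht : 0 < t) (hnd : n ≤ 2 * d) (h : d * (t * a) ≤ 1) :
    √a ≤ √2 * n ^ (-(1 / 2) : ℝ) * t ^ (-(1 / 2) : ℝ) := by
  rw [Real.rpow_neg hn.le, Real.rpow_neg ht.le, ← Real.sqrt_eq_rpow, ← Real.sqrt_eq_rpow,
    ← Real.sqrt_inv, ← Real.sqrt_inv, ← Real.sqrt_mul (by positivity),
    ← Real.sqrt_mul (by positivity)]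
  refine Real.sqrt_le_sqrt ?_
  rw [mul_assoc, ← mul_inv, ← div_eq_mul_inv, le_div_iff₀ (by positivity)]
  rcases le_total 0 (t * a) with hta | hta <;> nlinarith

/-- `lam ⟨k - 1, _⟩` is the eigenvalue `λ_k` of the paper, so `λ_{⌊n/2⌋-1}` is
`lam ⟨n / 2 - 1 - 1, _⟩`. -/
theorem main_projection_theorem :
    ∃ c : ℝ, 0 < c ∧
      ∀ (V : Type) [Fintype V] (G : SimpleGraph V) [DecidableRel G.Adj],
        G.Connected →
        ∀ (lam : Fin (Fintype.card V - 1) → ℝ) (f : Fin (Fintype.card V - 1) → V → ℝ),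
          Monotone lam →
          (∀ i, lam i ≠ 0) →
          LinearIndependent ℝ f →
          (∀ i x, graphLaplacian G (f i) x = lam i * f i x) →
          ∀ (n : ℕ), 1 < n →
            ∀ (hidx : n / 2 - 1 - 1 < Fintype.card V - 1),
              ∀ T : V → EuclideanSpace ℝ (Fin n),
                (∀ x y : V, ‖T x - T y‖ ≤ (G.dist x y : ℝ)) →
                ∃ θ : EuclideanSpace ℝ (Fin n), ‖θ‖ = 1 ∧
                  Real.sqrt (∑ x : V, (inner ℝ (T x) θ : ℝ) ^ 2 * stationaryMeasure G x) ≤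
                    c * (n : ℝ) ^ (-(1 / 2) : ℝ) *
                      (lam ⟨n / 2 - 1 - 1, hidx⟩) ^ (-(1 / 2) : ℝ) := by
  refine ⟨√2, by positivity, fun V _ G _ hconn lam f hmono hlam0 hli hLf n hn hidx T hT => ?_⟩
  have : Nontrivial V := Fintype.one_lt_card_iff_nontrivial.mp (by omega)
  have hdeg : ∀ x, 0 < G.degree x := fun x => hconn.preconnected.degree_pos_of_nontrivial x
  have hf : ∀ i, G.graphLaplacianLinearMap (f i) = lam i • f i := fun i => funext (hLf i)
  set k : Fin (Fintype.card V - 1) := ⟨n / 2 - 1 - 1, hidx⟩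
  set Λ : Fin (Fintype.card V - 1 + 1) → ℝ := Fin.cons 0 lam
  have hs (i) (hi : Λ i < lam k) : i ∈ Iio k.succ := by
    induction i using Fin.cases with
    | zero => exact mem_Iio.mpr k.succ_pos
    | succ i => exact mem_Iio.mpr (Fin.succ_lt_succ_iff.mpr (hmono.reflect_lt hi))
  obtain ⟨θ, hθ, hbound⟩ := G.exists_norm_eq_one_mul_stationaryForm_inner_le
    (G.graphLaplacianLinearMap_cons_one hdeg hf)
    (G.span_range_cons_one_eq_top hdeg hli hlam0 hf) hs
    (by simp only [Fin.card_Iio, finrank_euclideanSpace_fin, Fin.val_succ, k]; omega)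
    (fun x y hxy => (hT x y).trans (by simp [SimpleGraph.dist_eq_one_iff_adj.mpr hxy]))
  refine ⟨θ, hθ, ?_⟩
  have hsum : ∑ x, inner ℝ (T x) θ ^ 2 * stationaryMeasure G x =
      G.stationaryForm (fun x => inner ℝ (T x) θ) (fun x => inner ℝ (T x) θ) :=
    sum_congr rfl fun x _ => by rw [sq]
  rw [hsum]
  refine Real.sqrt_le_sqrt_two_mul_rpow_mul_rpow
    (by exact_mod_cast (by omega : 0 < n))
    (G.pos_of_graphLaplacianLinearMap_eq_smul hdeg (hli.ne_zero k) (hlam0 k) (hf k)) ?_ hbound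
  simp only [Fin.card_Iio, finrank_euclideanSpace_fin, Fin.val_succ, k]
  exact_mod_cast (by omega : n ≤ 2 * (n - (n / 2 - 1 - 1 + 1)))
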